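/- For all positive integers n, a, b and real q with 0 < q < 1: ∑_{n ≥ k_1 ≥ ⋯ ≥ k_a ≥ 1} (∏_{j=1}^{a-1} q^{k_j}/[k_j]_q) · q^{k_a}/[k_a]_q^b equals ∑_{n ≥ k_1 ≥ ⋯ ≥ k_b ≥ 1} (-1)^{k_1+1} q^{k_1(k_1+1)/2} C_q(n,k_1) q^{(a-1)k_1}/[k_1]_q^a · ∏_{j=2}^{b} 1/[k_j]_q. (That is, Z_n[{1}^{a-1}, b] = A_n[a, {1}^{b-1}].) -/

import Mathlib

/-!
Both sides satisfy the same recursion in `n`. For `Z`, splitting off the term `k₁ = n + 1` gives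
`Z_{n+1}[s, w] = Z_n[s, w] + q^{n+1}/[n+1]^s · Z_{n+1}[w]`. For `A`, the `q`-Pascal rule and the
absorption identity `[n+1] C_q(n,k) = [k+1] C_q(n+1,k+1)` give
`A_{n+1}[s+1, v] = A_n[s+1, v] + q^{n+1}/[n+1] · A_{n+1}[s, v]`, also for `s = 0`, where the
integer exponent `(s-1)k` still makes sense. Finally `A_{n+1}[0, {1}^b] = 1/[n+1]^b`: the tail sums
of `(-1)^i q^{i(i+1)/2} C_q(n+1,i+1)` telescope by `q`-Pascal, so exchanging the order of summation
and absorbing reduces `b + 1` to `b`. A double induction on `n` and the number of leading ones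
then matches the two sides.
-/

/-- Gaussian binomial coefficient, vanishing unless `k ≤ n`. -/
noncomputable def qbinom (q : ℝ) (n k : ℕ) : ℝ :=
  if k ≤ n then ∏ j ∈ Finset.Icc 1 k, (1 - q ^ (n - k + j)) / (1 - q ^ j) else 0

/-- The `q`-analog of a natural number: `[k]_q = (1-q^k)/(1-q)`. -/
noncomputable def qnum (q : ℝ) (k : ℕ) : ℝ := (1 - q ^ k) / (1 - q)

/-- `Zn q n [s₁,…,s_m] = ∑_{n ≥ k₁ ≥ ⋯ ≥ k_m ≥ 1} ∏_j q^{k_j} [k_j]_q^{-s_j}`. -/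
noncomputable def Zn (q : ℝ) : ℕ → List ℕ → ℝ
  | _, [] => 1
  | n, s :: t => ∑ k ∈ Finset.Icc 1 n, q ^ k / (qnum q k) ^ s * Zn q k t

/-- `Wn q n [s₁,…,s_m] = ∑_{n ≥ k₁ ≥ ⋯ ≥ k_m ≥ 1} ∏_j q^{(s_j-1) k_j} [k_j]_q^{-s_j}`. -/
noncomputable def Wn (q : ℝ) : ℕ → List ℕ → ℝ
  | _, [] => 1
  | n, s :: t => ∑ k ∈ Finset.Icc 1 n,
      q ^ (((s : ℤ) - 1) * (k : ℤ)) / (qnum q k) ^ s * Wn q k t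

/-- `An q n [s₁,…,s_m] = ∑_{n ≥ k₁ ≥ ⋯ ≥ k_m ≥ 1} (-1)^{k₁+1} q^{k₁(k₁+1)/2} C_q(n,k₁)
    ∏_j q^{(s_j-1) k_j} [k_j]_q^{-s_j}`. -/
noncomputable def An (q : ℝ) (n : ℕ) : List ℕ → ℝ
  | [] => 1
  | s :: t => ∑ k ∈ Finset.Icc 1 n,
      (-1 : ℝ) ^ (k + 1) * q ^ (k * (k + 1) / 2) * qbinom q n k *
        (q ^ (((s : ℤ) - 1) * (k : ℤ)) / (qnum q k) ^ s) * Wn q k t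

open Finset

lemma Finset.sum_Icc_one_eq_sum_range {M : Type*} [AddCommMonoid M] (f : ℕ → M) (n : ℕ) :
    ∑ k ∈ Icc 1 n, f k = ∑ i ∈ range n, f (i + 1) := by
  rw [range_eq_Ico, sum_Ico_add' f 0 n 1, zero_add, Ico_add_one_right_eq_Icc]

lemma Nat.triangle_succ' (i : ℕ) : (i + 1) * (i + 1 + 1) / 2 = i * (i + 1) / 2 + (i + 1) := by
  rw [show (i + 1) * (i + 1 + 1) = i * (i + 1) + 2 * (i + 1) by ring,
    Nat.add_mul_div_left _ _ two_pos]

noncomputable def qPochhammer (q : ℝ) (n : ℕ) : ℝ := ∏ j ∈ Icc 1 n, (1 - q ^ j)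

section

variable {q : ℝ}

lemma one_sub_pow_ne_zero (hq : |q| ≠ 1) {j : ℕ} (hj : j ≠ 0) : 1 - q ^ j ≠ 0 := by
  rw [sub_ne_zero, ne_comm]
  intro h
  exact hq ((pow_eq_one_iff_of_nonneg (abs_nonneg q) hj).1 (by rw [← abs_pow, h, abs_one]))

lemma qnum_ne_zero (hq : |q| ≠ 1) {k : ℕ} (hk : k ≠ 0) : qnum q k ≠ 0 :=
  div_ne_zero (one_sub_pow_ne_zero hq hk) (by simpa using one_sub_pow_ne_zero hq one_ne_zero)

lemma qPochhammer_ne_zero (hq : |q| ≠ 1) (n : ℕ) : qPochhammer q n ≠ 0 :=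
  prod_ne_zero_iff.2 fun _ hj => one_sub_pow_ne_zero hq (by rw [mem_Icc] at hj; omega)

lemma qPochhammer_succ (q : ℝ) (n : ℕ) :
    qPochhammer q (n + 1) = qPochhammer q n * (1 - q ^ (n + 1)) :=
  prod_Icc_succ_top (by omega) _

lemma qPochhammer_add (q : ℝ) (m k : ℕ) :
    qPochhammer q (m + k) = qPochhammer q m * ∏ j ∈ Icc 1 k, (1 - q ^ (m + j)) := by
  induction k with
  | zero => simp
  | succ k ih => rw [← add_assoc, qPochhammer_succ, ih, prod_Icc_succ_top (by omega), mul_assoc,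
    ← add_assoc]

lemma qbinom_eq_zero_of_lt {n k : ℕ} (h : n < k) : qbinom q n k = 0 := if_neg (by omega)

lemma qbinom_zero_right (q : ℝ) (n : ℕ) : qbinom q n 0 = 1 := by simp [qbinom]

lemma qbinom_eq_div (hq : |q| ≠ 1) {n k : ℕ} (hk : k ≤ n) :
    qbinom q n k = qPochhammer q n / (qPochhammer q (n - k) * qPochhammer q k) := by
  obtain ⟨m, rfl⟩ : ∃ m, n = m + k := ⟨n - k, by omega⟩
  rw [qbinom, if_pos hk, prod_div_distrib, Nat.add_sub_cancel, qPochhammer_add,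
    mul_div_mul_left _ _ (qPochhammer_ne_zero hq m)]
  rfl

lemma one_sub_pow_succ_mul_qbinom (hq : |q| ≠ 1) (n k : ℕ) :
    (1 - q ^ (n + 1)) * qbinom q n k = (1 - q ^ (k + 1)) * qbinom q (n + 1) (k + 1) := by
  rcases le_or_gt k n with hk | hk
  · rw [qbinom_eq_div hq hk, qbinom_eq_div hq (by omega), Nat.add_sub_add_right,
      qPochhammer_succ, qPochhammer_succ]
    have := qPochhammer_ne_zero hq (n - k)
    have := qPochhammer_ne_zero hq k
    have := one_sub_pow_ne_zero hq (j := k + 1) (by omega)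
    field_simp
  · rw [qbinom_eq_zero_of_lt hk, qbinom_eq_zero_of_lt (by omega), mul_zero, mul_zero]

lemma one_sub_pow_succ_mul_qbinom_succ (hq : |q| ≠ 1) (n k : ℕ) :
    (1 - q ^ (n + 1)) * qbinom q n (k + 1) = (1 - q ^ (n - k)) * qbinom q (n + 1) (k + 1) := by
  rcases lt_trichotomy k n with hk | rfl | hk
  · obtain ⟨r, rfl⟩ : ∃ r, n = k + 1 + r := ⟨n - (k + 1), by omega⟩
    rw [qbinom_eq_div hq (by omega), qbinom_eq_div hq (by omega),
      show k + 1 + r - (k + 1) = r by omega, show k + 1 + r + 1 - (k + 1) = r + 1 by omega,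
      show k + 1 + r - k = r + 1 by omega, qPochhammer_succ _ r, qPochhammer_succ _ (k + 1 + r)]
    have := qPochhammer_ne_zero hq r
    have := qPochhammer_ne_zero hq (k + 1)
    have := one_sub_pow_ne_zero hq (j := r + 1) (by omega)
    field_simp
  · rw [qbinom_eq_zero_of_lt (by omega), Nat.sub_self, pow_zero]; ring
  · rw [qbinom_eq_zero_of_lt (by omega), qbinom_eq_zero_of_lt (by omega)]; ring

lemma qnum_succ_mul_qbinom (hq : |q| ≠ 1) (n k : ℕ) :
    qnum q (n + 1) * qbinom q n k = qnum q (k + 1) * qbinom q (n + 1) (k + 1) := by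
  simp only [qnum, div_mul_eq_mul_div, one_sub_pow_succ_mul_qbinom hq]

lemma qbinom_succ_succ (hq : |q| ≠ 1) (n k : ℕ) :
    qbinom q (n + 1) (k + 1) = qbinom q n k + q ^ (k + 1) * qbinom q n (k + 1) := by
  rcases le_or_gt k n with hk | hk
  · have hpow : q ^ (k + 1) * q ^ (n - k) = q ^ (n + 1) := by rw [← pow_add]; congr 1; omega
    refine mul_left_cancel₀ (one_sub_pow_ne_zero hq (j := n + 1) (by omega)) ?_
    linear_combination -one_sub_pow_succ_mul_qbinom hq n k
      - q ^ (k + 1) * one_sub_pow_succ_mul_qbinom_succ hq n k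
      + qbinom q (n + 1) (k + 1) * hpow
  · rw [qbinom_eq_zero_of_lt hk, qbinom_eq_zero_of_lt (by omega), qbinom_eq_zero_of_lt (by omega)]
    ring

lemma qbinom_succ_succ' (hq : |q| ≠ 1) {n k : ℕ} (hk : k ≤ n) :
    qbinom q (n + 1) (k + 1) = q ^ (n - k) * qbinom q n k + qbinom q n (k + 1) := by
  have hpow : q ^ (n - k) * q ^ (k + 1) = q ^ (n + 1) := by rw [← pow_add]; congr 1; omega
  refine mul_left_cancel₀ (one_sub_pow_ne_zero hq (j := n + 1) (by omega)) ?_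
  linear_combination -q ^ (n - k) * one_sub_pow_succ_mul_qbinom hq n k
    - one_sub_pow_succ_mul_qbinom_succ hq n k + qbinom q (n + 1) (k + 1) * hpow

lemma alternating_qbinom_succ_succ_eq_sub (hq : |q| ≠ 1) (m i : ℕ) :
    (-1) ^ i * q ^ (i * (i + 1) / 2) * qbinom q (m + 1) (i + 1)
      = (-1) ^ i * q ^ (i * (i + 1) / 2) * qbinom q m i
        - (-1) ^ (i + 1) * q ^ ((i + 1) * (i + 1 + 1) / 2) * qbinom q m (i + 1) := by
  rw [qbinom_succ_succ hq, Nat.triangle_succ', pow_add, pow_succ (-1 : ℝ)]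
  ring

lemma sum_Ico_alternating_qbinom (hq : |q| ≠ 1) {m j : ℕ} (hj : j ≤ m + 1) :
    ∑ i ∈ Ico j (m + 1), (-1) ^ i * q ^ (i * (i + 1) / 2) * qbinom q (m + 1) (i + 1)
      = (-1) ^ j * q ^ (j * (j + 1) / 2) * qbinom q m j := by
  have htele := sum_Ico_sub (fun i => -((-1) ^ i * q ^ (i * (i + 1) / 2) * qbinom q m i)) hj
  simp only [sub_neg_eq_add, neg_add_eq_sub, qbinom_eq_zero_of_lt (Nat.lt_succ_self m),
    mul_zero, neg_zero, zero_add] at htele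
  rw [← htele]
  exact sum_congr rfl fun i _ => alternating_qbinom_succ_succ_eq_sub hq m i

lemma pow_mul_qbinom_succ_sub_div_qnum (hq : |q| ≠ 1) (n k : ℕ) :
    q ^ (k + 1) * (qbinom q (n + 1) (k + 1) - qbinom q n (k + 1)) / qnum q (k + 1)
      = q ^ (n + 1) / qnum q (n + 1) * qbinom q (n + 1) (k + 1) := by
  rcases le_or_gt k n with hk | hk
  · have hpow : q ^ (k + 1) * q ^ (n - k) = q ^ (n + 1) := by rw [← pow_add]; congr 1; omega
    have := qnum_ne_zero hq (k := k + 1) (by omega)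
    have := qnum_ne_zero hq (k := n + 1) (by omega)
    have hdiff : qbinom q (n + 1) (k + 1) - qbinom q n (k + 1) = q ^ (n - k) * qbinom q n k := by
      rw [qbinom_succ_succ' hq hk]; ring
    rw [hdiff, ← hpow]
    field_simp
    linear_combination (q ^ (k + 1) * q ^ (n - k)) * qnum_succ_mul_qbinom hq n k
  · rw [qbinom_eq_zero_of_lt (by omega), qbinom_eq_zero_of_lt (by omega)]
    simp

lemma Wn_succ_one_cons (k : ℕ) (t : List ℕ) :
    Wn q (k + 1) (1 :: t) = ∑ j ∈ range (k + 1), Wn q (j + 1) t / qnum q (j + 1) := by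
  rw [Wn, sum_Icc_one_eq_sum_range]
  simp [div_eq_inv_mul]

lemma An_succ_zero_cons (hq0 : q ≠ 0) (m : ℕ) (t : List ℕ) :
    An q (m + 1) (0 :: t) = ∑ i ∈ range (m + 1),
      (-1) ^ i * q ^ (i * (i + 1) / 2) * qbinom q (m + 1) (i + 1) * Wn q (i + 1) t := by
  rw [An, sum_Icc_one_eq_sum_range]
  refine sum_congr rfl fun i _ => ?_
  simp only [Nat.cast_zero, zero_sub, neg_one_mul, zpow_neg, zpow_natCast, pow_zero, div_one,
    Nat.triangle_succ', pow_add]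
  field_simp

lemma An_succ_zero_cons_replicate_one (hq0 : q ≠ 0) (hq : |q| ≠ 1) (m b : ℕ) :
    An q (m + 1) (0 :: List.replicate b 1) = 1 / qnum q (m + 1) ^ b := by
  induction b with
  | zero => simpa [An_succ_zero_cons hq0, Wn, qbinom_zero_right, ← range_eq_Ico]
      using sum_Ico_alternating_qbinom hq (m := m) (Nat.zero_le _)
  | succ b ih =>
    rw [List.replicate_succ, An_succ_zero_cons hq0]
    simp_rw [Wn_succ_one_cons, mul_sum]
    rw [sum_comm' (t' := range (m + 1)) (s' := fun j => Ico j (m + 1))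
      (fun i j => by simp only [mem_range, mem_Ico]; omega)]
    have hterm : ∀ j ∈ range (m + 1),
        ∑ i ∈ Ico j (m + 1), (-1) ^ i * q ^ (i * (i + 1) / 2) * qbinom q (m + 1) (i + 1)
          * (Wn q (j + 1) (List.replicate b 1) / qnum q (j + 1))
        = 1 / qnum q (m + 1) * ((-1) ^ j * q ^ (j * (j + 1) / 2) * qbinom q (m + 1) (j + 1)
          * Wn q (j + 1) (List.replicate b 1)) := by
      intro j hj
      have := qnum_ne_zero hq (k := j + 1) (by omega)
      have := qnum_ne_zero hq (k := m + 1) (by omega)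
      rw [← sum_mul, sum_Ico_alternating_qbinom hq (by rw [mem_range] at hj; omega)]
      field_simp
      linear_combination Wn q (j + 1) (List.replicate b 1) * qnum_succ_mul_qbinom hq m j
    rw [sum_congr rfl hterm, ← mul_sum, ← An_succ_zero_cons hq0, ih, pow_succ]
    ring

lemma An_succ (hq0 : q ≠ 0) (hq : |q| ≠ 1) (n s : ℕ) (t : List ℕ) :
    An q (n + 1) ((s + 1) :: t)
      = An q n ((s + 1) :: t) + q ^ (n + 1) / qnum q (n + 1) * An q (n + 1) (s :: t) := by
  have hextend : An q n ((s + 1) :: t) = ∑ k ∈ Icc 1 (n + 1),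
      (-1 : ℝ) ^ (k + 1) * q ^ (k * (k + 1) / 2) * qbinom q n k *
        (q ^ ((((s + 1 : ℕ) : ℤ) - 1) * (k : ℤ)) / (qnum q k) ^ (s + 1)) * Wn q k t := by
    rw [An, sum_Icc_succ_top (by omega), qbinom_eq_zero_of_lt (Nat.lt_succ_self n)]
    simp
  rw [hextend, An, An, mul_sum, ← sum_add_distrib]
  refine sum_congr rfl fun k hk => ?_
  obtain ⟨i, rfl⟩ : ∃ i, k = i + 1 := ⟨k - 1, by rw [mem_Icc] at hk; omega⟩
  have hzpow : q ^ ((((s + 1 : ℕ) : ℤ) - 1) * ((i + 1 : ℕ) : ℤ))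
      = q ^ (((s : ℤ) - 1) * ((i + 1 : ℕ) : ℤ)) * q ^ (i + 1) := by
    rw [← zpow_natCast q (i + 1), ← zpow_add₀ hq0]
    push_cast
    ring_nf
  rw [hzpow, pow_succ (qnum q (i + 1)) s]
  linear_combination ((-1 : ℝ) ^ (i + 1 + 1) * q ^ ((i + 1) * (i + 1 + 1) / 2)
      * (q ^ (((s : ℤ) - 1) * ((i + 1 : ℕ) : ℤ)) / qnum q (i + 1) ^ s) * Wn q (i + 1) t)
    * pow_mul_qbinom_succ_sub_div_qnum hq n i

lemma Zn_succ (q : ℝ) (n s : ℕ) (t : List ℕ) :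
    Zn q (n + 1) (s :: t)
      = Zn q n (s :: t) + q ^ (n + 1) / qnum q (n + 1) ^ s * Zn q (n + 1) t := by
  rw [Zn, Zn, sum_Icc_succ_top (by omega)]

theorem Zn_replicate_one_append_eq_An (hq0 : q ≠ 0) (hq : |q| ≠ 1) (b : ℕ) :
    ∀ n a : ℕ, Zn q n (List.replicate a 1 ++ [b + 1]) = An q n ((a + 1) :: List.replicate b 1)
  | 0, a => by cases a <;> simp [Zn, An, List.replicate_succ]
  | n + 1, 0 => by
    have ih := Zn_replicate_one_append_eq_An hq0 hq b n 0
    rw [List.replicate_zero, List.nil_append] at ih ⊢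
    rw [Zn_succ, ih, An_succ hq0 hq, An_succ_zero_cons_replicate_one hq0 hq, pow_succ]
    simp only [Zn]
    ring
  | n + 1, a + 1 => by
    rw [List.replicate_succ, List.cons_append, Zn_succ, ← List.cons_append, ← List.replicate_succ,
      Zn_replicate_one_append_eq_An hq0 hq b n (a + 1),
      Zn_replicate_one_append_eq_An hq0 hq b (n + 1) a, An_succ hq0 hq n (a + 1), pow_one]

end

theorem duality_r1_general (n a b : ℕ) (ha : 0 < a) (hb : 0 < b)
    (q : ℝ) (hq0 : 0 < q) (hq1 : q < 1) :
    Zn q n (List.replicate (a - 1) 1 ++ [b]) = An q n (a :: List.replicate (b - 1) 1) := by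
  obtain ⟨a, rfl⟩ : ∃ a', a = a' + 1 := ⟨a - 1, by omega⟩
  obtain ⟨b, rfl⟩ : ∃ b', b = b' + 1 := ⟨b - 1, by omega⟩
  have hq : |q| ≠ 1 := by rw [abs_of_pos hq0]; exact hq1.ne
  simpa using Zn_replicate_one_append_eq_An hq0.ne' hq b n a

/-- Corollary 2: `Z_n[{1}^{a-1}, b] = A_n[a, {1}^{b-1}]`. -/
theorem duality_r1 (n a b : ℕ) (hn : 0 < n) (ha : 0 < a) (hb : 0 < b)
    (q : ℝ) (hq0 : 0 < q) (hq1 : q < 1) :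
    Zn q n (List.replicate (a - 1) 1 ++ [b]) = An q n (a :: List.replicate (b - 1) 1) :=
  duality_r1_general n a b ha hb q hq0 hq1
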